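/- Let T, S be bounded operators on a complex Hilbert space H and n an even positive integer. Let R be the n×n block operator matrix on H^n with T on the main diagonal, S on the anti-diagonal, and zeros elsewhere. Then w(R) = max{w(T + S), w(T − S)}. -/

import Mathlib

noncomputable def numRadius {E : Type*} [NormedAddCommGroup E] [InnerProductSpace ℂ E]
    (T : E →L[ℂ] E) : ℝ :=
  sSup {r : ℝ | ∃ x : E, ‖x‖ = 1 ∧ r = ‖(inner ℂ (T x) x : ℂ)‖}

noncomputable def blockOp {H : Type*} [NormedAddCommGroup H] [InnerProductSpace ℂ H]
    (n : ℕ) (M : Fin n → Fin n → H →L[ℂ] H) :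
    (PiLp 2 fun _ : Fin n => H) →L[ℂ] (PiLp 2 fun _ : Fin n => H) :=
  (PiLp.continuousLinearEquiv 2 ℂ (fun _ : Fin n => H)).symm.toContinuousLinearMap ∘L
    (ContinuousLinearMap.pi fun i => ∑ j, (M i j).comp (ContinuousLinearMap.proj j)) ∘L
    (PiLp.continuousLinearEquiv 2 ℂ (fun _ : Fin n => H)).toContinuousLinearMap

/-!
Reflection `i ↦ n - 1 - i` has no fixed point when `n` is even, so it pairs the coordinates
of `Hⁿ`. On a pair `(a, b)` the quadratic form of `R` is that of `[[T, S], [S, T]]`, which the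
unitary `(a, b) ↦ ((a + b) / √2, (a - b) / √2)` turns into that of `(T + S) ⊕ (T - S)`; with the
parallelogram law this gives `w(R) ≤ max (w(T + S)) (w(T - S))`. Conversely, `x ↦ (εᵢ x / √n)ᵢ`
with `ε ≡ 1`, resp. `ε = 1` on the first half and `-1` on the second, is an isometry
`H → Hⁿ` intertwining `T + S`, resp. `T - S`, with `R`.
-/

open Finset

lemma Fin.sum_univ_rev {M : Type*} [AddCommMonoid M] {n : ℕ} (g : Fin n → M) :
    ∑ i : Fin n, g i.rev = ∑ i, g i :=
  Equiv.sum_comp Fin.revPerm g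

section NumericalRadius

variable {E F : Type*} [NormedAddCommGroup E] [InnerProductSpace ℂ E]
  [NormedAddCommGroup F] [InnerProductSpace ℂ F]

lemma numRadius_bddAbove (A : E →L[ℂ] E) :
    BddAbove {r : ℝ | ∃ x : E, ‖x‖ = 1 ∧ r = ‖(inner ℂ (A x) x : ℂ)‖} := by
  refine ⟨‖A‖, ?_⟩
  rintro r ⟨x, hx, rfl⟩
  calc ‖(inner ℂ (A x) x : ℂ)‖ ≤ ‖A x‖ * ‖x‖ := norm_inner_le_norm _ _
    _ ≤ ‖A‖ * ‖x‖ * ‖x‖ := by gcongr; exact A.le_opNorm x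
    _ = ‖A‖ := by rw [hx, mul_one, mul_one]

lemma numRadius_nonneg (A : E →L[ℂ] E) : 0 ≤ numRadius A :=
  Real.sSup_nonneg (by rintro r ⟨x, -, rfl⟩; positivity)

lemma numRadius_le {A : E →L[ℂ] E} {c : ℝ} (hc : 0 ≤ c)
    (h : ∀ x, ‖x‖ = 1 → ‖(inner ℂ (A x) x : ℂ)‖ ≤ c) : numRadius A ≤ c :=
  Real.sSup_le (by rintro r ⟨x, hx, rfl⟩; exact h x hx) hc

lemma norm_inner_le_numRadius (A : E →L[ℂ] E) {x : E} (hx : ‖x‖ = 1) :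
    ‖(inner ℂ (A x) x : ℂ)‖ ≤ numRadius A :=
  le_csSup (numRadius_bddAbove A) ⟨x, hx, rfl⟩

lemma norm_inner_le_numRadius_mul_sq (A : E →L[ℂ] E) (x : E) :
    ‖(inner ℂ (A x) x : ℂ)‖ ≤ numRadius A * ‖x‖ ^ 2 := by
  rcases eq_or_ne x 0 with rfl | hx
  · simp
  have hunit := norm_inner_le_numRadius A (norm_smul_inv_norm (𝕜 := ℂ) hx)
  rw [map_smul, inner_smul_left, inner_smul_right, norm_mul, norm_mul] at hunit
  simp only [RCLike.norm_conj, norm_inv, RCLike.norm_ofReal, abs_norm] at hunit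
  have hpos : 0 < ‖x‖ := norm_pos_iff.mpr hx
  calc ‖(inner ℂ (A x) x : ℂ)‖ = ‖x‖ ^ 2 * (‖x‖⁻¹ * (‖x‖⁻¹ * ‖(inner ℂ (A x) x : ℂ)‖)) := by
        field_simp
    _ ≤ ‖x‖ ^ 2 * numRadius A := by gcongr
    _ = numRadius A * ‖x‖ ^ 2 := mul_comm _ _

lemma numRadius_le_of_intertwine (V : E →ₗᵢ[ℂ] F) {A : E →L[ℂ] E} {B : F →L[ℂ] F}
    (h : ∀ x, B (V x) = V (A x)) : numRadius A ≤ numRadius B :=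
  numRadius_le (numRadius_nonneg B) fun x hx => by
    simpa only [h, V.inner_map_map] using norm_inner_le_numRadius B ((V.norm_map x).trans hx)

lemma inner_antidiag_pair_eq (T S : E →L[ℂ] E) (a b : E) :
    2 * ((inner ℂ (T a) a + inner ℂ (S b) a) + (inner ℂ (T b) b + inner ℂ (S a) b) : ℂ)
      = inner ℂ ((T + S) (a + b)) (a + b) + inner ℂ ((T - S) (a - b)) (a - b) := by
  simp only [add_apply, sub_apply, map_add, map_sub,
    inner_add_left, inner_add_right, inner_sub_left, inner_sub_right]
  ring

lemma norm_inner_antidiag_pair_le (T S : E →L[ℂ] E) (a b : E) :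
    ‖((inner ℂ (T a) a + inner ℂ (S b) a) + (inner ℂ (T b) b + inner ℂ (S a) b) : ℂ)‖
      ≤ max (numRadius (T + S)) (numRadius (T - S)) * (‖a‖ ^ 2 + ‖b‖ ^ 2) := by
  set K := max (numRadius (T + S)) (numRadius (T - S))
  have hK : 0 ≤ K := le_max_of_le_left (numRadius_nonneg _)
  have hplus := norm_inner_le_numRadius_mul_sq (T + S) (a + b)
  have hminus := norm_inner_le_numRadius_mul_sq (T - S) (a - b)
  have hpar := parallelogram_law_with_norm ℂ a b
  suffices h : ‖2 * ((inner ℂ (T a) a + inner ℂ (S b) a) + (inner ℂ (T b) b + inner ℂ (S a) b) : ℂ)‖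
      ≤ 2 * (K * (‖a‖ ^ 2 + ‖b‖ ^ 2)) by
    rw [norm_mul, Complex.norm_two] at h
    linarith
  rw [inner_antidiag_pair_eq]
  calc _ ≤ numRadius (T + S) * ‖a + b‖ ^ 2 + numRadius (T - S) * ‖a - b‖ ^ 2 :=
        (norm_add_le _ _).trans (add_le_add hplus hminus)
    _ ≤ K * ‖a + b‖ ^ 2 + K * ‖a - b‖ ^ 2 := by
        gcongr
        exacts [le_max_left _ _, le_max_right _ _]
    _ = 2 * (K * (‖a‖ ^ 2 + ‖b‖ ^ 2)) := by rw [← mul_add, hpar]; ring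

end NumericalRadius

section BlockOperator

variable {H : Type*} [NormedAddCommGroup H] [InnerProductSpace ℂ H] {n : ℕ}

def diagAntidiag (T S : H →L[ℂ] H) (n : ℕ) : Fin n → Fin n → H →L[ℂ] H :=
  fun i j => if i = j then T else if (i : ℕ) + (j : ℕ) = n - 1 then S else 0

lemma blockOp_apply (M : Fin n → Fin n → H →L[ℂ] H) (x : PiLp 2 fun _ : Fin n => H)
    (i : Fin n) : blockOp n M x i = ∑ j, M i j (x j) := by
  simp [blockOp]

lemma blockOp_diagAntidiag_apply (T S : H →L[ℂ] H) (hn : Even n)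
    (x : PiLp 2 fun _ : Fin n => H) (i : Fin n) :
    blockOp n (diagAntidiag T S n) x i = T (x i) + S (x i.rev) := by
  have hrev : ∀ j : Fin n, (i : ℕ) + j = n - 1 ↔ j = i.rev := fun j => by
    rw [Fin.ext_iff, Fin.val_rev]; omega
  have hi : i ≠ i.rev := fun h => by
    obtain ⟨m, rfl⟩ := hn
    rw [Fin.ext_iff, Fin.val_rev] at h; omega
  have hterm : ∀ j, diagAntidiag T S n i j (x j)
      = (if j = i then T (x j) else 0) + (if j = i.rev then S (x j) else 0) := fun j => by
    rcases eq_or_ne j i with rfl | hji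
    · simp [diagAntidiag, hi]
    · simp only [diagAntidiag, if_neg hji.symm, if_neg hji, hrev, zero_add]
      split_ifs <;> rfl
  simp only [blockOp_apply, hterm, sum_add_distrib, sum_ite_eq', mem_univ, if_true]

lemma numRadius_blockOp_diagAntidiag_le (T S : H →L[ℂ] H) (hn : Even n) :
    numRadius (blockOp n (diagAntidiag T S n))
      ≤ max (numRadius (T + S)) (numRadius (T - S)) := by
  set K := max (numRadius (T + S)) (numRadius (T - S))
  refine numRadius_le (le_max_of_le_left (numRadius_nonneg _)) fun x hx => ?_
  set f : Fin n → ℂ := fun i => inner ℂ (T (x i)) (x i) + inner ℂ (S (x i.rev)) (x i)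
  have hinner : inner ℂ (blockOp n (diagAntidiag T S n) x) x = ∑ i, f i := by
    simp only [PiLp.inner_apply, blockOp_diagAntidiag_apply T S hn, inner_add_left, f]
  have hnorm : ∑ i, ‖x i‖ ^ 2 = 1 := by rw [← PiLp.norm_sq_eq_of_L2, hx, one_pow]
  have hsym : ∑ i, (f i + f i.rev) = 2 * ∑ i, f i := by
    rw [sum_add_distrib (f := f), Fin.sum_univ_rev f, two_mul]
  have hpair : ∀ i, ‖f i + f i.rev‖ ≤ K * (‖x i‖ ^ 2 + ‖x i.rev‖ ^ 2) := fun i => by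
    simpa only [f, Fin.rev_rev] using norm_inner_antidiag_pair_le T S (x i) (x i.rev)
  have hdouble : 2 * ‖inner ℂ (blockOp n (diagAntidiag T S n) x) x‖ ≤ 2 * K :=
    calc 2 * ‖inner ℂ (blockOp n (diagAntidiag T S n) x) x‖ = ‖∑ i, (f i + f i.rev)‖ := by
          rw [hinner, hsym, norm_mul, Complex.norm_two]
      _ ≤ ∑ i, K * (‖x i‖ ^ 2 + ‖x i.rev‖ ^ 2) :=
          (norm_sum_le _ _).trans (sum_le_sum fun i _ => hpair i)
      _ = 2 * K := by
          rw [← mul_sum, sum_add_distrib, Fin.sum_univ_rev (fun i => ‖x i‖ ^ 2), hnorm]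
          ring
  linarith

def smulVectorIsometry {ι : Type*} [Fintype ι] (u : EuclideanSpace ℂ ι) (hu : ‖u‖ = 1) :
    H →ₗᵢ[ℂ] PiLp 2 fun _ : ι => H where
  toFun x := WithLp.toLp 2 fun i => u i • x
  map_add' x y := by ext i; simp [smul_add]
  map_smul' c x := by ext i; simp [smul_comm (u i) c]
  norm_map' x := by
    change ‖WithLp.toLp 2 (fun i => u i • x)‖ = ‖x‖
    rw [← sq_eq_sq₀ (norm_nonneg _) (norm_nonneg _), PiLp.norm_sq_eq_of_L2]
    simp only [norm_smul, mul_pow, ← sum_mul, ← EuclideanSpace.norm_sq_eq, hu, one_pow, one_mul]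

lemma le_numRadius_blockOp_diagAntidiag (T S : H →L[ℂ] H) (hn0 : 0 < n) (hn : Even n)
    (ε : Fin n → ℂ) (hε : ∀ i, ‖ε i‖ = 1) (s : ℂ) (hs : ∀ i, ε i.rev = s * ε i) :
    numRadius (T + s • S) ≤ numRadius (blockOp n (diagAntidiag T S n)) := by
  set c : ℂ := ((√n : ℝ) : ℂ)⁻¹
  have hu : ‖c • (WithLp.toLp 2 ε : EuclideanSpace ℂ (Fin n))‖ = 1 := by
    have hsqrt : 0 < √(n : ℝ) := Real.sqrt_pos.mpr (by exact_mod_cast hn0)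
    rw [norm_smul, EuclideanSpace.norm_eq]
    simp [c, hε, abs_of_pos hsqrt, hsqrt.ne']
  refine numRadius_le_of_intertwine (smulVectorIsometry _ hu) fun x => ?_
  ext i
  simp [smulVectorIsometry, blockOp_diagAntidiag_apply T S hn, hs, smul_smul, mul_comm,
    mul_assoc]

end BlockOperator

variable {H : Type*} [NormedAddCommGroup H] [InnerProductSpace ℂ H]
theorem stmt9 (T S : H →L[ℂ] H) (n : ℕ) (hn : 0 < n) (hne : Even n) :
    numRadius (blockOp n (fun i j =>
        if i = j then T else if (i : ℕ) + (j : ℕ) = n - 1 then S else 0)) =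
      max (numRadius (T + S)) (numRadius (T - S)) := by
  change numRadius (blockOp n (diagAntidiag T S n)) = _
  refine le_antisymm (numRadius_blockOp_diagAntidiag_le T S hne) (max_le ?_ ?_)
  · simpa using le_numRadius_blockOp_diagAntidiag T S hn hne (fun _ => 1) (by simp) 1 (by simp)
  · set ε : Fin n → ℂ := fun i => if (i : ℕ) < n / 2 then 1 else -1
    have hε : ∀ i, ‖ε i‖ = 1 := fun i => by simp only [ε]; split_ifs <;> simp
    have hrev : ∀ i, ε i.rev = -1 * ε i := fun i => by
      obtain ⟨m, rfl⟩ := hne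
      have := i.isLt
      simp only [ε, Fin.val_rev]
      split_ifs <;> first | (exfalso; omega) | simp
    simpa [sub_eq_add_neg] using le_numRadius_blockOp_diagAntidiag T S hn hne ε hε (-1) hrev
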